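/- arXiv:2311.08254 — 2 statements merged into one kernel-verified Lean document; each statement's English description precedes it below -/
import Mathlib

section
/- Let T be an invertible H × H real matrix, and suppose the index set {1,…,H} is partitioned into blocks B_1,…,B_K. Suppose g_1,…,g_H and e_1,…,e_H are functions where g_h and e_h depend only on the coordinate u_{k(h)} (k(h) being the block of h), and T·(e_1(u_{k(1)}),…,e_H(u_{k(H)}))ᵀ = (g_1(u_{k(1)}),…,g_H(u_{k(H)}))ᵀ for all u ∈ [0,1]^K. If for each block the functions e_h restricted to that block's coordinate are non-constant and no function in one block is expressible as an affine function of a single coordinate from another block, then T_{h,h'} = 0 whenever k(h) ≠ k(h'). That is, T is block diagonal with respect to the partition. -/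
open Matrix Set Finset

/-- Block-diagonality of the transformation relating two NIFTY parameterizations.
Factors are grouped by the latent location `k h` they are mapped from. If the family
of functions within each block admits no nontrivial linear combination that is constant
on `[0,1]` (encoding that each `e h` is non-constant and there are no affine relations
across a block), then any invertible `T` intertwining the two parameterizations must
have vanishing cross-block entries. -/
theorem transformation_block_diagonal (H K : ℕ) (T : Matrix (Fin H) (Fin H) ℝ)
    (hT : IsUnit T.det) (k : Fin H → Fin K) (g e : Fin H → ℝ → ℝ)
    (heq : ∀ u : Fin K → ℝ, (∀ i, u i ∈ Icc (0:ℝ) 1) →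
      ∀ h : Fin H, ∑ h', T h h' * e h' (u (k h')) = g h (u (k h)))
    (hindep : ∀ (k' : Fin K) (c : Fin H → ℝ),
      (∃ b : ℝ, ∀ x ∈ Icc (0:ℝ) 1,
        ∑ h' ∈ Finset.univ.filter (fun h' => k h' = k'), c h' * e h' x = b) →
      ∀ h', k h' = k' → c h' = 0) :
    ∀ h h', k h ≠ k h' → T h h' = 0 := by
  intro h h' hne
  set k' := k h'
  apply hindep k' (T h) _ h' rfl
  refine ⟨g h 0 - ∑ h'' ∈ Finset.univ.filter (fun h'' => ¬ k h'' = k'),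
      T h h'' * e h'' 0, ?_⟩
  intro x hx
  set u : Fin K → ℝ := fun i => if i = k' then x else 0 with hu
  have hmem : ∀ i, u i ∈ Icc (0:ℝ) 1 := by
    intro i
    by_cases hi : i = k' <;> simp [hu, hi, hx, Set.mem_Icc]
  have := heq u hmem h
  have hsplit : ∑ h'', T h h'' * e h'' (u (k h'')) =
      (∑ h'' ∈ Finset.univ.filter (fun h'' => k h'' = k'), T h h'' * e h'' x)
      + ∑ h'' ∈ Finset.univ.filter (fun h'' => ¬ k h'' = k'), T h h'' * e h'' 0 := by
    rw [← Finset.sum_filter_add_sum_filter_not Finset.univ (fun h'' => k h'' = k')]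
    congr 1
    · apply Finset.sum_congr rfl
      intro a ha
      simp only [Finset.mem_filter] at ha
      simp [hu, ha.2]
    · apply Finset.sum_congr rfl
      intro a ha
      simp only [Finset.mem_filter] at ha
      simp [hu, ha.2]
  have huh : u (k h) = 0 := by simp [hu, hne]
  rw [hsplit, huh] at this
  linarith
end

section
/- For N ≥ 1 and k fixed, let u_{1k},…,u_{Nk} have joint density on [0,1]^N proportional to exp(−ν Σ_{i=1}^N (u_{(i)k} − i/N)²), where u_{(i)k} denotes the i-th order statistic. Then as ν → ∞ followed by N → ∞, the marginal distribution of u_{1k} converges weakly to the uniform distribution on [0,1]. -/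
/-!
As `ν → ∞` the weight `exp (-ν S)` on the cube concentrates on the zero set of `S`, which is the
set of permutations of the grid `((i + 1) / (N + 1))ᵢ`: the sublevel sets `{S < δ}` have positive
volume, while by compactness a continuous `Φ` is uniformly close to its value on the zero set on
`{S < δ}` for small `δ`. The zero set is not a point and `φ (u 0)` is not constant on it, but `S`
and the cube are permutation invariant, so `φ (u 0)` may be replaced by the average
`(∑ j, φ (u j)) / (N + 1)`, which on the zero set is the Riemann sum of `φ` on the grid. These
Riemann sums converge to `∫₀¹ φ`. Continuity of `S`, which sorts its argument, comes from the
rearrangement inequality: `S u` is the minimum over permutations `σ` of `∑ i, (u (σ i) - gᵢ)²`.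
-/

open MeasureTheory Set Filter Finset

noncomputable def grid (N : ℕ) : Fin (N + 1) → ℝ := fun i => ((i : ℝ) + 1) / (N + 1)

noncomputable def sortedSqDist {n : ℕ} (g u : Fin n → ℝ) : ℝ :=
  ∑ i, (u (Tuple.sort u i) - g i) ^ 2

section SortedSqDist

variable {n : ℕ}

theorem sortedSqDist_nonneg (g u : Fin n → ℝ) : 0 ≤ sortedSqDist g u :=
  Finset.sum_nonneg fun _ _ => sq_nonneg _

theorem sortedSqDist_comp_perm (g u : Fin n → ℝ) (σ : Equiv.Perm (Fin n)) :
    sortedSqDist g (u ∘ σ) = sortedSqDist g u := by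
  unfold sortedSqDist
  exact Finset.sum_congr rfl fun i _ => by
    rw [← Function.comp_apply (f := u ∘ σ), Tuple.comp_perm_comp_sort_eq_comp_sort]; rfl

theorem sortedSqDist_self {g : Fin n → ℝ} (hg : Monotone g) : sortedSqDist g g = 0 := by
  simp [sortedSqDist, Tuple.sort_eq_refl_iff_monotone.mpr hg]

theorem comp_sort_eq_of_sortedSqDist_eq_zero {g u : Fin n → ℝ} (h : sortedSqDist g u = 0) :
    u ∘ Tuple.sort u = g := by
  funext i
  have := (Finset.sum_eq_zero_iff_of_nonneg fun i _ => sq_nonneg _).mp h i (mem_univ i)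
  exact sub_eq_zero.mp (pow_eq_zero_iff two_ne_zero |>.mp this)

theorem sum_comp_eq_of_sortedSqDist_eq_zero {M : Type*} [AddCommMonoid M] (f : ℝ → M)
    {g u : Fin n → ℝ} (h : sortedSqDist g u = 0) : ∑ i, f (u i) = ∑ i, f (g i) := by
  rw [← comp_sort_eq_of_sortedSqDist_eq_zero h, ← Equiv.sum_comp (Tuple.sort u)]
  rfl

theorem sortedSqDist_le_sum_sq_comp_perm {g : Fin n → ℝ} (hg : Monotone g) (u : Fin n → ℝ)
    (σ : Equiv.Perm (Fin n)) : sortedSqDist g u ≤ ∑ i, (u (σ i) - g i) ^ 2 := by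
  set π := Tuple.sort u
  have hcross : ∑ i, u (σ i) * g i ≤ ∑ i, u (π i) * g i := by
    have hmv : Monovary (u ∘ π) g := (Tuple.monotone_sort u).monovary hg
    simpa [Function.comp_def] using hmv.sum_comp_perm_mul_le_sum_mul (σ := σ.trans π.symm)
  have hsq (τ : Equiv.Perm (Fin n)) : ∑ i, (u (τ i) - g i) ^ 2
      = ∑ i, u i ^ 2 - 2 * ∑ i, u (τ i) * g i + ∑ i, g i ^ 2 := by
    rw [← Equiv.sum_comp τ (fun i => u i ^ 2), Finset.mul_sum, ← Finset.sum_sub_distrib,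
      ← Finset.sum_add_distrib]
    exact Finset.sum_congr rfl fun i _ => by ring
  rw [sortedSqDist, hsq, hsq]
  linarith

theorem sortedSqDist_eq_inf' {g : Fin n → ℝ} (hg : Monotone g) (u : Fin n → ℝ) :
    sortedSqDist g u = univ.inf' univ_nonempty fun σ : Equiv.Perm (Fin n) =>
      ∑ i, (u (σ i) - g i) ^ 2 :=
  le_antisymm (le_inf' _ _ fun σ _ => sortedSqDist_le_sum_sq_comp_perm hg u σ)
    (inf'_le _ (mem_univ (Tuple.sort u)))

theorem continuous_sortedSqDist {g : Fin n → ℝ} (hg : Monotone g) :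
    Continuous (sortedSqDist g) := by
  rw [funext (sortedSqDist_eq_inf' hg)]
  exact Continuous.finset_inf'_apply _ fun σ _ => by fun_prop

end SortedSqDist

theorem monotone_grid (N : ℕ) : Monotone (grid N) := fun i j hij => by
  unfold grid
  gcongr
  exact_mod_cast hij

theorem grid_mem_Icc (N : ℕ) (i : Fin (N + 1)) : grid N i ∈ Icc (0 : ℝ) 1 := by
  have : (i : ℝ) ≤ N := by exact_mod_cast Fin.is_le i
  exact ⟨by unfold grid; positivity, (div_le_one (by positivity)).mpr (by linarith)⟩

theorem measure_univ_pi_Icc_inter_pos {ι : Type*} [Fintype ι] (μ : Measure (ι → ℝ))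
    [μ.IsOpenPosMeasure] {a b : ι → ℝ} (hab : ∀ i, a i < b i) {U : Set (ι → ℝ)}
    (hU : IsOpen U) (hne : ((univ.pi fun i => Icc (a i) (b i)) ∩ U).Nonempty) :
    0 < μ ((univ.pi fun i => Icc (a i) (b i)) ∩ U) := by
  obtain ⟨x, hxK, hxU⟩ := hne
  have hx : x ∈ closure (univ.pi fun i => Ioo (a i) (b i)) := by
    simpa [closure_pi_set, closure_Ioo (hab _).ne] using hxK
  obtain ⟨y, hyU, hyI⟩ := mem_closure_iff.mp hx U hU hxU
  refine ((hU.inter (isOpen_set_pi finite_univ fun _ _ => isOpen_Ioo)).measure_pos μ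
    ⟨y, hyU, hyI⟩).trans_le (measure_mono ?_)
  exact fun z ⟨hzU, hzI⟩ => ⟨fun i hi => Ioo_subset_Icc_self (hzI i hi), hzU⟩

theorem IsCompact.exists_pos_forall_lt_imp_abs_sub_lt {X : Type*} [TopologicalSpace X]
    {K : Set X} (hK : IsCompact K) {S Φ : X → ℝ} (hS : Continuous S) (hΦ : Continuous Φ)
    {L : ℝ} (hL : ∀ x ∈ K, S x ≤ 0 → Φ x = L) {ε : ℝ} (hε : 0 < ε) :
    ∃ δ > 0, ∀ x ∈ K, S x < δ → |Φ x - L| < ε := by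
  set A := K ∩ {x | ε ≤ |Φ x - L|}
  have hA : IsCompact A := hK.inter_right (isClosed_le continuous_const (by fun_prop))
  have hSA : ∀ x ∈ A, 0 < S x := fun x ⟨hxK, hxε⟩ => by
    by_contra! h
    simp [hL x hxK h] at hxε
    linarith
  obtain ⟨δ, hδ, hδA⟩ := hA.exists_forall_le' hS.continuousOn hSA
  exact ⟨δ, hδ, fun x hxK hx => not_le.mp fun hxε => (hδA x ⟨hxK, hxε⟩).not_gt hx⟩

section Gibbs

variable {X : Type*} [MeasurableSpace X] {μ : Measure X} [IsFiniteMeasure μ] {S Φ : X → ℝ}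
  {ν : ℝ}

theorem integrable_exp_neg_mul_of_nonneg (hS : Measurable S) (hS0 : ∀ x, 0 ≤ S x) (hν : 0 ≤ ν) :
    Integrable (fun x => Real.exp (-ν * S x)) μ := by
  refine Integrable.of_bound (by fun_prop) 1 (ae_of_all _ fun x => ?_)
  rw [Real.norm_eq_abs, abs_of_pos (Real.exp_pos _), Real.exp_le_one_iff]
  nlinarith [hS0 x]

theorem exp_mul_measureReal_le_integral_exp (hS : Measurable S)
    (hw : Integrable (fun x => Real.exp (-ν * S x)) μ) (hν : 0 ≤ ν) (δ : ℝ) :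
    Real.exp (-ν * δ) * μ.real {x | S x < δ} ≤ ∫ x, Real.exp (-ν * S x) ∂μ := by
  calc Real.exp (-ν * δ) * μ.real {x | S x < δ}
      ≤ ∫ x in {x | S x < δ}, Real.exp (-ν * S x) ∂μ :=
        setIntegral_ge_of_const_le_real (hS measurableSet_Iio) (measure_ne_top _ _)
          (fun x hx => Real.exp_le_exp.mpr (by nlinarith [hx.out.le])) hw.integrableOn
    _ ≤ ∫ x, Real.exp (-ν * S x) ∂μ :=
        setIntegral_le_integral hw (ae_of_all _ fun _ => (Real.exp_pos _).le)

/-- On `{S < δ}` the error `|Φ - L|` is at most `ε`; elsewhere the weight is at most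
`exp (-ν δ)`, which is negligible against the mass `exp (-ν δ / 2) μ {S < δ / 2}` of the
normaliser. -/
theorem abs_integral_mul_exp_div_integral_exp_sub_le (hS : Measurable S)
    (hw : Integrable (fun x => Real.exp (-ν * S x)) μ)
    (hΦw : Integrable (fun x => Φ x * Real.exp (-ν * S x)) μ) (hν : 0 ≤ ν) {L M ε δ : ℝ}
    (hM : ∀ᵐ x ∂μ, |Φ x - L| ≤ M) (hε0 : 0 ≤ ε) (hε : ∀ᵐ x ∂μ, S x < δ → |Φ x - L| ≤ ε)
    (hb : 0 < μ.real {x | S x < δ / 2}) :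
    |(∫ x, Φ x * Real.exp (-ν * S x) ∂μ) / ∫ x, Real.exp (-ν * S x) ∂μ - L|
      ≤ ε + M * μ.real univ / μ.real {x | S x < δ / 2} * Real.exp (-ν * (δ / 2)) := by
  set w := fun x => Real.exp (-ν * S x)
  set Z := ∫ x, w x ∂μ
  set b := μ.real {x | S x < δ / 2}
  have hZb : Real.exp (-ν * (δ / 2)) * b ≤ Z := exp_mul_measureReal_le_integral_exp hS hw hν _
  have hZ : 0 < Z := lt_of_lt_of_le (by positivity) hZb
  have hpt : ∀ᵐ x ∂μ, ‖(Φ x - L) * w x‖ ≤ ε * w x + M * Real.exp (-ν * δ) := by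
    filter_upwards [hM, hε] with x hMx hεx
    have hwx : 0 < w x := Real.exp_pos _
    rw [Real.norm_eq_abs, abs_mul, abs_of_pos hwx]
    rcases lt_or_ge (S x) δ with hx | hx
    · nlinarith [hεx hx, Real.exp_pos (-ν * δ), abs_nonneg (Φ x - L)]
    · have : w x ≤ Real.exp (-ν * δ) := Real.exp_le_exp.mpr (by nlinarith)
      nlinarith [abs_nonneg (Φ x - L)]
  have hnum : |∫ x, (Φ x - L) * w x ∂μ| ≤ ε * Z + M * Real.exp (-ν * δ) * μ.real univ := by
    have := norm_integral_le_of_norm_le ((hw.const_mul ε).add (integrable_const _)) hpt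
    simp only [Pi.add_apply] at this
    rwa [integral_add (hw.const_mul ε) (integrable_const _), integral_const_mul,
      integral_const, smul_eq_mul, mul_comm (μ.real univ)] at this
  have hratio : (∫ x, Φ x * w x ∂μ) / Z - L = (∫ x, (Φ x - L) * w x ∂μ) / Z := by
    simp_rw [sub_mul]
    rw [integral_sub hΦw (hw.const_mul L), integral_const_mul, sub_div,
      mul_div_cancel_right₀ _ hZ.ne']
  have hexp : Real.exp (-ν * δ) = Real.exp (-ν * (δ / 2)) * Real.exp (-ν * (δ / 2)) := by
    rw [← Real.exp_add]; ring_nf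
  have hM0 : 0 ≤ M := by
    have : μ ≠ 0 := by rintro rfl; simp [b] at hb
    have : (ae μ).NeBot := ae_neBot.mpr this
    obtain ⟨x, hx⟩ := hM.exists
    exact (abs_nonneg _).trans hx
  have htail : M * Real.exp (-ν * δ) * μ.real univ
      ≤ M * μ.real univ / b * Real.exp (-ν * (δ / 2)) * Z :=
    calc M * Real.exp (-ν * δ) * μ.real univ
        = M * μ.real univ / b * Real.exp (-ν * (δ / 2)) * (Real.exp (-ν * (δ / 2)) * b) := by
          rw [hexp]; field_simp
      _ ≤ _ := by gcongr
  rw [hratio, abs_div, abs_of_pos hZ, div_le_iff₀ hZ]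
  linarith

theorem tendsto_integral_mul_exp_div_integral_exp (hS : Measurable S) (hS0 : ∀ x, 0 ≤ S x)
    (hΦ : Measurable Φ) {L C : ℝ} (hΦC : ∀ᵐ x ∂μ, |Φ x| ≤ C)
    (hconc : ∀ ε > 0, ∃ δ > 0, ∀ᵐ x ∂μ, S x < δ → |Φ x - L| ≤ ε)
    (hpos : ∀ δ > 0, 0 < μ {x | S x < δ}) :
    Tendsto (fun ν : ℝ => (∫ x, Φ x * Real.exp (-ν * S x) ∂μ) / ∫ x, Real.exp (-ν * S x) ∂μ)
      atTop (nhds L) := by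
  rw [Metric.tendsto_nhds]
  intro ε hε
  obtain ⟨δ, hδ, hδε⟩ := hconc (ε / 2) (half_pos hε)
  have hM : ∀ᵐ x ∂μ, |Φ x - L| ≤ C + |L| := by
    filter_upwards [hΦC] with x hx
    exact (abs_sub _ _).trans (by linarith)
  have hb : 0 < μ.real {x | S x < δ / 2} :=
    ENNReal.toReal_pos (hpos _ (half_pos hδ)).ne' (measure_ne_top _ _)
  set K := (C + |L|) * μ.real univ / μ.real {x | S x < δ / 2}
  have htail : Tendsto (fun ν : ℝ => K * Real.exp (-ν * (δ / 2))) atTop (nhds 0) := by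
    simpa using (Real.tendsto_exp_neg_atTop_nhds_zero.comp
      (tendsto_id.atTop_mul_const (half_pos hδ))).const_mul K
  filter_upwards [htail.eventually (gt_mem_nhds (half_pos hε)), eventually_ge_atTop 0]
    with ν hν_tail hν
  have hw := integrable_exp_neg_mul_of_nonneg (μ := μ) hS hS0 hν
  have hΦw : Integrable (fun x => Φ x * Real.exp (-ν * S x)) μ :=
    hw.bdd_mul hΦ.aestronglyMeasurable (by simpa only [Real.norm_eq_abs] using hΦC)
  rw [Real.dist_eq]
  calc _ ≤ ε / 2 + K * Real.exp (-ν * (δ / 2)) :=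
        abs_integral_mul_exp_div_integral_exp_sub_le hS hw hΦw hν hM (half_pos hε).le hδε hb
    _ < ε := by linarith

end Gibbs

theorem integral_comp_perm_pi {ι α E : Type*} [Fintype ι] [MeasurableSpace α]
    [NormedAddCommGroup E] [NormedSpace ℝ E] (μ : Measure α) [SigmaFinite μ]
    (τ : Equiv.Perm ι) (f : (ι → α) → E) :
    ∫ u, f (u ∘ τ) ∂Measure.pi (fun _ => μ) = ∫ u, f u ∂Measure.pi (fun _ => μ) :=
  (measurePreserving_arrowCongr' (fun _ => μ) (fun _ => μ) τ.symm (MeasurableEquiv.refl α)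
    fun _ => MeasurePreserving.id μ).integral_comp' f

theorem integral_apply_mul_eq_integral_average {ι α : Type*} [Fintype ι] [DecidableEq ι]
    [MeasurableSpace α] (μ : Measure α) [SigmaFinite μ] {g : (ι → α) → ℝ}
    (hg : ∀ (τ : Equiv.Perm ι) u, g (u ∘ τ) = g u) (φ : α → ℝ)
    (hint : ∀ j, Integrable (fun u => φ (u j) * g u) (Measure.pi fun _ => μ)) (i : ι) :
    ∫ u, φ (u i) * g u ∂Measure.pi (fun _ => μ)
      = ∫ u, (∑ j, φ (u j)) / Fintype.card ι * g u ∂Measure.pi (fun _ => μ) := by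
  have hj (j : ι) : ∫ u, φ (u j) * g u ∂Measure.pi (fun _ => μ)
      = ∫ u, φ (u i) * g u ∂Measure.pi (fun _ => μ) := by
    rw [← integral_comp_perm_pi μ (Equiv.swap i j)]
    simp [hg]
  have hcard : (Fintype.card ι : ℝ) ≠ 0 := Nat.cast_ne_zero.mpr (Fintype.card_pos_iff.mpr ⟨i⟩).ne'
  simp_rw [div_mul_eq_mul_div, Finset.sum_mul]
  rw [integral_div, integral_finsetSum _ fun j _ => hint j]
  simp [hj, hcard]

theorem abs_mul_sub_integral_le {φ : ℝ → ℝ} {a b c η : ℝ} (hab : a ≤ b)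
    (hφ : IntervalIntegrable φ volume a b) (h : ∀ x ∈ Icc a b, |c - φ x| ≤ η) :
    |(b - a) * c - ∫ x in a..b, φ x| ≤ η * (b - a) := by
  have := intervalIntegral.norm_integral_le_of_norm_le_const (a := a) (b := b)
    (f := fun x => c - φ x) fun x hx => h x (Ioc_subset_Icc_self (uIoc_of_le hab ▸ hx))
  rwa [intervalIntegral.integral_sub intervalIntegrable_const hφ, intervalIntegral.integral_const,
    smul_eq_mul, Real.norm_eq_abs, abs_of_nonneg (sub_nonneg.mpr hab)] at this

theorem abs_sum_div_sub_integral_le {φ : ℝ → ℝ} (hφ : ContinuousOn φ (Icc 0 1)) {n : ℕ}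
    (hn : 0 < n) {η : ℝ}
    (hη : ∀ x ∈ Icc (0 : ℝ) 1, ∀ y ∈ Icc (0 : ℝ) 1, dist x y ≤ 1 / n → |φ x - φ y| ≤ η) :
    |(∑ i ∈ range n, φ ((i + 1) / n)) / n - ∫ x in (0 : ℝ)..1, φ x| ≤ η := by
  have hn0 : (0 : ℝ) < n := by exact_mod_cast hn
  set a : ℕ → ℝ := fun i => i / n
  have ha_succ (i : ℕ) : a (i + 1) = (i + 1) / n := by simp [a]
  have hstep (i : ℕ) : a (i + 1) - a i = 1 / n := by rw [ha_succ]; ring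
  have hcell_sub {i : ℕ} (hi : i < n) : Icc (a i) (a (i + 1)) ⊆ Icc 0 1 :=
    Icc_subset_Icc (by positivity) (by rw [ha_succ, div_le_one hn0]; exact_mod_cast hi)
  have hcell : ∀ i ∈ range n,
      |(a (i + 1) - a i) * φ (a (i + 1)) - ∫ x in a i..a (i + 1), φ x| ≤ η * (1 / n) := by
    intro i hi
    have hsub := hcell_sub (mem_range.mp hi)
    have hi_step := hstep i
    have hle : a i ≤ a (i + 1) := by linarith [one_div_pos.mpr hn0]
    rw [← hi_step]
    refine abs_mul_sub_integral_le hle ((hφ.mono hsub).intervalIntegrable_of_Icc hle)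
      fun x hx => hη _ (hsub ⟨hle, le_rfl⟩) x (hsub hx) ?_
    rw [Real.dist_eq, abs_of_nonneg (by linarith [hx.2])]
    linarith [hx.1]
  have hsplit : ∫ x in (0 : ℝ)..1, φ x = ∑ i ∈ range n, ∫ x in a i..a (i + 1), φ x := by
    rw [intervalIntegral.sum_integral_adjacent_intervals fun i hi =>
      (hφ.mono (hcell_sub hi)).intervalIntegrable_of_Icc
        (by linarith [hstep i, one_div_pos.mpr hn0])]
    simp [a, hn0.ne']
  have hsum : (∑ i ∈ range n, φ ((i + 1) / n)) / n
      = ∑ i ∈ range n, (a (i + 1) - a i) * φ (a (i + 1)) := by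
    rw [Finset.sum_div]
    exact Finset.sum_congr rfl fun i _ => by rw [hstep, ha_succ]; ring
  rw [hsplit, hsum, ← Finset.sum_sub_distrib]
  calc _ ≤ ∑ i ∈ range n, η * (1 / n) :=
        (Finset.abs_sum_le_sum_abs _ _).trans (Finset.sum_le_sum hcell)
    _ = η := by rw [sum_const, card_range, nsmul_eq_mul]; field_simp

theorem tendsto_sum_div_integral {φ : ℝ → ℝ} (hφ : ContinuousOn φ (Icc 0 1)) :
    Tendsto (fun n : ℕ => (∑ i ∈ range n, φ ((i + 1) / n)) / n) atTop
      (nhds (∫ x in (0 : ℝ)..1, φ x)) := by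
  rw [Metric.tendsto_atTop]
  intro ε hε
  obtain ⟨δ, hδ, hφδ⟩ := Metric.uniformContinuousOn_iff.mp
    (isCompact_Icc.uniformContinuousOn_of_continuous hφ) (ε / 2) (half_pos hε)
  obtain ⟨n₀, hn₀⟩ := exists_nat_gt (1 / δ)
  refine ⟨n₀ + 1, fun n hn => ?_⟩
  have hmesh : 1 / (n : ℝ) < δ := by
    rw [one_div_lt (by exact_mod_cast (show 0 < n by omega)) hδ]
    exact hn₀.trans_le (by exact_mod_cast (Nat.le_succ n₀).trans hn)
  rw [Real.dist_eq]
  refine (abs_sum_div_sub_integral_le hφ (by omega) fun x hx y hy hxy => ?_).trans_lt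
    (half_lt_self hε)
  simpa [Real.dist_eq] using (hφδ x hx y hy (hxy.trans_lt hmesh)).le

theorem tendsto_sum_grid_div {φ : ℝ → ℝ} (hφ : ContinuousOn φ (Icc 0 1)) :
    Tendsto (fun N : ℕ => (∑ j, φ (grid N j)) / (N + 1)) atTop
      (nhds (∫ x in Icc (0 : ℝ) 1, φ x)) := by
  rw [integral_Icc_eq_integral_Ioc, ← intervalIntegral.integral_of_le zero_le_one]
  refine ((tendsto_sum_div_integral hφ).comp (tendsto_add_atTop_nat 1)).congr fun N => ?_
  simp [grid, Fin.sum_univ_eq_sum_range (fun i => φ ((i + 1) / (N + 1)))]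

theorem setIntegral_apply_zero_mul_exp_eq_average (N : ℕ) {φ : ℝ → ℝ} (hφ : Continuous φ)
    (ν : ℝ) :
    ∫ u in univ.pi (fun _ : Fin (N + 1) => Icc (0 : ℝ) 1),
        φ (u 0) * Real.exp (-ν * sortedSqDist (grid N) u)
      = ∫ u in univ.pi (fun _ : Fin (N + 1) => Icc (0 : ℝ) 1),
        (∑ j, φ (u j)) / (N + 1) * Real.exp (-ν * sortedSqDist (grid N) u) := by
  have hvol : volume.restrict (univ.pi fun _ : Fin (N + 1) => Icc (0 : ℝ) 1)
      = Measure.pi fun _ => volume.restrict (Icc (0 : ℝ) 1) := by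
    rw [volume_pi, Measure.restrict_pi_pi]
  have hS := continuous_sortedSqDist (monotone_grid N)
  rw [hvol, integral_apply_mul_eq_integral_average _
    (fun τ u => by rw [sortedSqDist_comp_perm]) φ (fun j => ?_) 0]
  · simp
  · rw [← hvol]
    exact ((hφ.comp (continuous_apply j)).mul (by fun_prop)).continuousOn.integrableOn_compact
      (isCompact_univ_pi fun _ => isCompact_Icc)

theorem tendsto_prior_expectation (N : ℕ) {φ : ℝ → ℝ} (hφ : Continuous φ) :
    Tendsto (fun ν : ℝ =>
        (∫ u in univ.pi (fun _ : Fin (N + 1) => Icc (0 : ℝ) 1),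
            φ (u 0) * Real.exp (-ν * sortedSqDist (grid N) u)) /
          ∫ u in univ.pi (fun _ : Fin (N + 1) => Icc (0 : ℝ) 1),
            Real.exp (-ν * sortedSqDist (grid N) u))
      atTop (nhds ((∑ j, φ (grid N j)) / (N + 1))) := by
  simp_rw [setIntegral_apply_zero_mul_exp_eq_average N hφ]
  set K := univ.pi fun _ : Fin (N + 1) => Icc (0 : ℝ) 1
  have hK : IsCompact K := isCompact_univ_pi fun _ => isCompact_Icc
  have hKm : MeasurableSet K := MeasurableSet.univ_pi fun _ => measurableSet_Icc
  have hS := continuous_sortedSqDist (monotone_grid N)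
  set Φ := fun u : Fin (N + 1) → ℝ => (∑ j, φ (u j)) / (N + 1)
  have hΦ : Continuous Φ := by fun_prop
  have : IsFiniteMeasure (volume.restrict K) := isFiniteMeasure_restrict.mpr hK.measure_ne_top
  obtain ⟨C, hC⟩ := hK.exists_bound_of_continuousOn hΦ.continuousOn
  refine tendsto_integral_mul_exp_div_integral_exp hS.measurable (sortedSqDist_nonneg _)
    hΦ.measurable (C := C) (ae_restrict_of_forall_mem hKm hC) (fun ε hε => ?_) (fun δ hδ => ?_)
  · obtain ⟨δ, hδ, h⟩ := hK.exists_pos_forall_lt_imp_abs_sub_lt hS hΦ (fun u _ hu => by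
      simp only [Φ]
      rw [sum_comp_eq_of_sortedSqDist_eq_zero φ (hu.antisymm (sortedSqDist_nonneg _ _))]) hε
    exact ⟨δ, hδ, ae_restrict_of_forall_mem hKm fun u hu hSu => (h u hu hSu).le⟩
  · rw [Measure.restrict_apply' hKm, inter_comm]
    refine measure_univ_pi_Icc_inter_pos volume (fun _ => zero_lt_one)
      (isOpen_lt hS continuous_const)
      ⟨grid N, fun i _ => grid_mem_Icc N i, ?_⟩
    simpa [sortedSqDist_self (monotone_grid N)] using hδ

/-- Constraint-relaxation prior (Proposition 1 of the NIFTY paper).  For `N` points on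
`[0,1]` with joint density proportional to `exp(−ν Σᵢ (u_{(i)} − i/N)²)` (order statistics
penalized towards the uniform grid), as `ν → ∞` followed by `N → ∞` the marginal of the
first coordinate converges weakly to the uniform distribution on `[0,1]`:  for every
bounded continuous test function `φ`, the ν-limit of the expectation of `φ(u₁)` exists
for each `N` and converges to `∫₀¹ φ` as `N → ∞`. -/
theorem constraint_relaxation_prior_uniform_limit
    (S : (N : ℕ) → (Fin (N + 1) → ℝ) → ℝ)
    (hS : ∀ N u, S N u = ∑ i : Fin (N + 1),
      (u (Tuple.sort u i) - ((i : ℝ) + 1) / (N + 1)) ^ 2)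
    (cube : (N : ℕ) → Set (Fin (N + 1) → ℝ))
    (hcube : ∀ N, cube N = {u | ∀ i, u i ∈ Icc (0:ℝ) 1})
    (Z : ℕ → ℝ → ℝ)
    (hZ : ∀ N ν, Z N ν = ∫ u in cube N, Real.exp (-ν * S N u)) :
    ∀ φ : ℝ → ℝ, Continuous φ → (∃ C, ∀ x, |φ x| ≤ C) →
      Tendsto (fun N : ℕ =>
          limUnder atTop (fun ν : ℝ =>
            (∫ u in cube N, φ (u 0) * Real.exp (-ν * S N u)) / Z N ν))
        atTop (nhds (∫ x in Icc (0:ℝ) 1, φ x)) := by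
  intro φ hφ _
  obtain rfl : S = fun N => sortedSqDist (grid N) := funext fun N => funext (hS N)
  obtain rfl : cube = fun N => univ.pi fun _ => Icc 0 1 :=
    funext fun N => (hcube N).trans (by ext; simp [-pi_univ_Icc])
  have hlim (N : ℕ) : limUnder atTop (fun ν : ℝ =>
      (∫ u in univ.pi (fun _ => Icc 0 1), φ (u 0) * Real.exp (-ν * sortedSqDist (grid N) u)) /
        Z N ν) = (∑ j, φ (grid N j)) / (N + 1) := by
    simp only [hZ]
    exact (tendsto_prior_expectation N hφ).limUnder_eq
  simp only [hlim]
  exact tendsto_sum_grid_div hφ.continuousOn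
end
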